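/- arXiv:1612.07011 — 2 statements merged into one kernel-verified Lean document; each statement's English description precedes it below -/
import Mathlib

section
/- Let A, B ∈ GL(2,F) and let P(λ) be a matrix polynomial of grade g. Then the composition of Möbius transformations satisfies M_B[M_A[P]](λ) = M_{AB}[P](λ). -/
/-!
Homogenizing at grade `g` identifies a polynomial of degree at most `g` with a binary form
`P̂(x, y)` of degree `g`, and `M_A[P]` is `P̂(a x + b y, c x + d y)` dehomogenized at `y = 1`.
Since `M_A[P]` again has degree at most `g`, its homogenization is `P̂ ∘ A`; applying `M_B`
substitutes a second pair of linear forms, and composing the two linear substitutions gives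
the one of `AB`.
-/

open Polynomial

/-- The Möbius transformation of a matrix polynomial `P` (of grade `g`) induced by the
2×2 matrix `A = [[a,b],[c,d]]`. -/
noncomputable def mobius {F : Type*} [Field F] {m n : Type*}
    (a b c d : F) (g : ℕ) (P : Matrix m n (Polynomial F)) : Matrix m n (Polynomial F) :=
  ∑ i ∈ Finset.range (g + 1),
    ((C a * X + C b) ^ i * (C c * X + C d) ^ (g - i)) • P.map (fun p => C (p.coeff i))

namespace Polynomial

variable {R : Type*} [CommSemiring R]

theorem aeval_homogenize_eq_sum_range {A : Type*} [CommSemiring A] [Algebra R A]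
    (p : R[X]) (g : ℕ) (x : Fin 2 → A) :
    MvPolynomial.aeval x (p.homogenize g) =
      ∑ i ∈ Finset.range (g + 1), x 0 ^ i * x 1 ^ (g - i) * algebraMap R A (p.coeff i) := by
  simp [homogenize, Finset.Nat.sum_antidiagonal_eq_sum_range_succ_mk,
    MvPolynomial.aeval_monomial, Finsupp.prod_fintype, mul_comm]

theorem homogenize_aeval_affine (p : R[X]) (g : ℕ) (a b c d : R) :
    (MvPolynomial.aeval ![C a * X + C b, C c * X + C d] (p.homogenize g)).homogenize g =
      MvPolynomial.bind₁ ![.C a * .X 0 + .C b * .X 1, .C c * .X 0 + .C d * .X 1]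
        (p.homogenize g) := by
  apply homogenize_eq_of_isHomogeneous
  · have hlinear : ∀ k, (![.C a * .X 0 + .C b * .X 1, .C c * .X 0 + .C d * .X 1] k :
        MvPolynomial (Fin 2) R).IsHomogeneous 1 := by
      intro k
      fin_cases k <;>
        exact (MvPolynomial.isHomogeneous_C_mul_X _ _).add (MvPolynomial.isHomogeneous_C_mul_X _ _)
    simpa using (isHomogeneous_homogenize p).aeval _ hlinear
  · rw [MvPolynomial.aeval_bind₁]
    congr
    funext k
    fin_cases k <;> simp

end Polynomial

theorem mobius_apply {F : Type*} [Field F] {m n : Type*} (a b c d : F) (g : ℕ)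
    (P : Matrix m n F[X]) (i : m) (j : n) :
    mobius a b c d g P i j =
      MvPolynomial.aeval ![C a * X + C b, C c * X + C d] ((P i j).homogenize g) := by
  simp [mobius, aeval_homogenize_eq_sum_range, Matrix.sum_apply]

/-- Here `B = [[a',b'],[c',d']]`, and the coefficients on the right are the entries of `AB`. -/
theorem mobius_comp_general {F : Type*} [Field F] {m n : Type*}
    (a b c d a' b' c' d' : F) (g : ℕ)
    (P : Matrix m n (Polynomial F)) :
    mobius a' b' c' d' g (mobius a b c d g P) =
      mobius (a * a' + b * c') (a * b' + b * d') (c * a' + d * c') (c * b' + d * d') g P := by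
  ext i j
  rw [mobius_apply, mobius_apply, mobius_apply, homogenize_aeval_affine,
    MvPolynomial.aeval_bind₁]
  congr
  funext k
  fin_cases k <;> simp <;> ring

/-- Composition of Möbius transformations: `M_B[M_A[P]] = M_{AB}[P]`, where
`A = [[a,b],[c,d]]`, `B = [[a',b'],[c',d']]`, so that
`AB = [[a*a'+b*c', a*b'+b*d'],[c*a'+d*c', c*b'+d*d']]`, all transformations taken with
grade `g`. -/
theorem mobius_comp {F : Type*} [Field F] {m n : Type*}
    (a b c d a' b' c' d' : F)
    (hA : a * d - b * c ≠ 0) (hB : a' * d' - b' * c' ≠ 0) (g : ℕ)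
    (P : Matrix m n (Polynomial F)) (hP : ∀ i j, (P i j).degree ≤ (g : ℕ)) :
    mobius a' b' c' d' g (mobius a b c d g P) =
      mobius (a * a' + b * c') (a * b' + b * d') (c * a' + d * c') (c * b' + d * d') g P :=
  mobius_comp_general a b c d a' b' c' d' g P
end

section
/- Let P(λ) = Σ_{i=0}^g P_i λ^i and Q(λ) = Σ_{i=0}^t Q_i λ^i be matrix polynomials such that P(λ)Q(λ) is defined. Then ‖P(λ)Q(λ)‖_F ≤ min{√(g+1), √(t+1)} · ‖P(λ)‖_F · ‖Q(λ)‖_F. -/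
/-!
Write `P(λ) = ∑ λ^i P_i`, `Q(λ) = ∑ λ^j Q_j` and `a_i = ‖P_i‖_F`, `b_j = ‖Q_j‖_F`.
Submultiplicativity of the Frobenius norm gives `‖(PQ)_k‖_F ≤ ∑_{i+j=k} a_i b_j`. At most `g + 1`
terms of this sum are nonzero, so by Cauchy–Schwarz its square is at most
`(g + 1) ∑_{i+j=k} a_i² b_j²`, and summing over `k` (a Cauchy product) gives
`‖PQ‖_F² ≤ (g + 1) ‖P‖_F² ‖Q‖_F²`. Transposing exchanges the roles of `g` and `t`.
-/

open Polynomial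

/-- The Frobenius norm of a matrix polynomial:
`‖P(λ)‖_F = √(∑_i ‖P_i‖_F²)` (independent of the grade chosen). -/
noncomputable def polyFrobNorm {m n : Type*} [Fintype m] [Fintype n]
    (M : Matrix m n (Polynomial ℂ)) : ℝ :=
  Real.sqrt (∑' i : ℕ, ∑ r, ∑ c, ‖(M r c).coeff i‖ ^ 2)

open Finset
open scoped Matrix Matrix.Norms.Frobenius

theorem Matrix.frobenius_norm_sq {α m n : Type*} [SeminormedAddCommGroup α] [Fintype m]
    [Fintype n] (A : Matrix m n α) : ‖A‖ ^ 2 = ∑ i, ∑ j, ‖A i j‖ ^ 2 := by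
  rw [Matrix.frobenius_norm_def, ← Real.rpow_natCast, ← Real.rpow_mul (by positivity)]
  norm_num

theorem sq_sum_antidiagonal_le (g k : ℕ) (a b : ℕ → ℝ) (ha : ∀ i, g < i → a i = 0) :
    (∑ x ∈ antidiagonal k, a x.1 * b x.2) ^ 2 ≤
      (g + 1) * ∑ x ∈ antidiagonal k, a x.1 ^ 2 * b x.2 ^ 2 := by
  set s := {x ∈ antidiagonal k | x.1 ≤ g}
  have hs : #s ≤ g + 1 := by
    simpa using card_le_card_of_injOn (t := range (g + 1)) Prod.fst
      (fun x hx => by simp_all [s]) fun x hx y hy hxy => by simp_all [s, Prod.ext_iff]; omega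
  have hsupp (f : ℕ × ℕ → ℝ) (hf : ∀ x, g < x.1 → f x = 0) :
      ∑ x ∈ s, f x = ∑ x ∈ antidiagonal k, f x :=
    sum_filter_of_ne fun x _ hx => not_lt.mp fun h => hx (hf x h)
  rw [← hsupp _ fun x hx => by simp [ha _ hx], ← hsupp _ fun x hx => by simp [ha _ hx]]
  calc (∑ x ∈ s, a x.1 * b x.2) ^ 2 ≤ #s * ∑ x ∈ s, (a x.1 * b x.2) ^ 2 :=
        sq_sum_le_card_mul_sum_sq
    _ ≤ (g + 1) * ∑ x ∈ s, a x.1 ^ 2 * b x.2 ^ 2 := by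
        simp_rw [mul_pow]
        gcongr
        exact_mod_cast hs

theorem tsum_sq_le_of_abs_le_sum_antidiagonal (g : ℕ) (a b c : ℕ → ℝ)
    (ha : ∀ i, g < i → a i = 0) (hb : Summable fun j => b j ^ 2)
    (hc : ∀ k, |c k| ≤ ∑ x ∈ antidiagonal k, a x.1 * b x.2) :
    ∑' k, c k ^ 2 ≤ (g + 1) * (∑' i, a i ^ 2) * ∑' j, b j ^ 2 := by
  have ha' : Summable fun i => ‖a i ^ 2‖ := by
    refine summable_of_ne_finset_zero (s := range (g + 1)) fun i hi => ?_
    simp [ha i (by simpa using hi)]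
  have hb' : Summable fun j => ‖b j ^ 2‖ := by simpa using hb
  rw [mul_assoc, tsum_mul_tsum_eq_tsum_sum_antidiagonal_of_summable_norm ha' hb', ← tsum_mul_left]
  have hbound k : c k ^ 2 ≤ (g + 1) * ∑ x ∈ antidiagonal k, a x.1 ^ 2 * b x.2 ^ 2 := by
    rw [← sq_abs]
    exact (pow_le_pow_left₀ (abs_nonneg _) (hc k) 2).trans (sq_sum_antidiagonal_le g k a b ha)
  have hrhs := (summable_sum_mul_antidiagonal_of_summable_norm' ha' ha'.of_norm hb' hb).mul_left
    ((g : ℝ) + 1)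
  exact (hrhs.of_nonneg_of_le (fun _ => sq_nonneg _) hbound).tsum_le_tsum hbound hrhs

section MatrixPolynomial

variable {R m n p : Type*}

def coeffMatrix [Semiring R] (M : Matrix m n R[X]) (k : ℕ) : Matrix m n R :=
  M.map (coeff · k)

theorem coeffMatrix_mul [Semiring R] [Fintype n] (P : Matrix m n R[X]) (Q : Matrix n p R[X]) (k : ℕ) :
    coeffMatrix (P * Q) k = ∑ x ∈ antidiagonal k, coeffMatrix P x.1 * coeffMatrix Q x.2 := by
  ext r c
  simp only [coeffMatrix, Matrix.map_apply, Matrix.mul_apply, finsetSum_coeff, coeff_mul,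
    Matrix.sum_apply]
  exact sum_comm

theorem coeffMatrix_transpose [Semiring R] (M : Matrix m n R[X]) (k : ℕ) :
    coeffMatrix Mᵀ k = (coeffMatrix M k)ᵀ :=
  rfl

theorem coeffMatrix_eq_zero_of_degree_le [Semiring R] {M : Matrix m n R[X]} {d k : ℕ}
    (hM : ∀ i j, (M i j).degree ≤ d) (hk : d < k) : coeffMatrix M k = 0 := by
  ext i j
  exact coeff_eq_zero_of_degree_lt ((hM i j).trans_lt (by exact_mod_cast hk))

end MatrixPolynomial

section FrobeniusNorm

variable {m n p : Type*} [Fintype m] [Fintype n] [Fintype p]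

theorem polyFrobNorm_nonneg (M : Matrix m n ℂ[X]) : 0 ≤ polyFrobNorm M :=
  Real.sqrt_nonneg _

theorem polyFrobNorm_eq_sqrt_tsum (M : Matrix m n ℂ[X]) :
    polyFrobNorm M = √(∑' k, ‖coeffMatrix M k‖ ^ 2) := by
  simp only [polyFrobNorm, Matrix.frobenius_norm_sq, coeffMatrix, Matrix.map_apply]

theorem summable_norm_coeffMatrix_sq (M : Matrix m n ℂ[X]) :
    Summable fun k => ‖coeffMatrix M k‖ ^ 2 := by
  simp only [Matrix.frobenius_norm_sq, coeffMatrix, Matrix.map_apply]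
  exact summable_sum fun r _ => summable_sum fun c _ =>
    summable_of_ne_finset_zero (s := (M r c).support) fun k hk => by
      simp [notMem_support_iff.mp hk]

theorem norm_coeffMatrix_mul_le (P : Matrix m n ℂ[X]) (Q : Matrix n p ℂ[X]) (k : ℕ) :
    ‖coeffMatrix (P * Q) k‖ ≤
      ∑ x ∈ antidiagonal k, ‖coeffMatrix P x.1‖ * ‖coeffMatrix Q x.2‖ := by
  rw [coeffMatrix_mul]
  exact (norm_sum_le _ _).trans (sum_le_sum fun x _ => Matrix.frobenius_norm_mul _ _)

theorem polyFrobNorm_mul_le_sqrt_mul (g : ℕ) (P : Matrix m n ℂ[X]) (Q : Matrix n p ℂ[X])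
    (hP : ∀ i j, (P i j).degree ≤ g) :
    polyFrobNorm (P * Q) ≤ √(g + 1) * polyFrobNorm P * polyFrobNorm Q := by
  simp only [polyFrobNorm_eq_sqrt_tsum]
  rw [← Real.sqrt_mul (by positivity), ← Real.sqrt_mul (by positivity)]
  refine Real.sqrt_le_sqrt <| tsum_sq_le_of_abs_le_sum_antidiagonal g _ _ _ (fun i hi => ?_)
    (summable_norm_coeffMatrix_sq Q) fun k => ?_
  · simp [coeffMatrix_eq_zero_of_degree_le hP hi]
  · rw [abs_norm]
    exact norm_coeffMatrix_mul_le P Q k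

theorem polyFrobNorm_transpose (M : Matrix m n ℂ[X]) : polyFrobNorm Mᵀ = polyFrobNorm M := by
  simp only [polyFrobNorm_eq_sqrt_tsum, coeffMatrix_transpose, Matrix.frobenius_norm_transpose]

end FrobeniusNorm

/-- `‖P(λ)Q(λ)‖_F ≤ min{√(g+1), √(t+1)} · ‖P(λ)‖_F · ‖Q(λ)‖_F` for matrix polynomials
`P` of grade `g` and `Q` of grade `t`. -/
theorem polyFrobNorm_mul_le_min {m n p : Type*} [Fintype m] [Fintype n] [Fintype p]
    (g t : ℕ) (P : Matrix m n (Polynomial ℂ)) (Q : Matrix n p (Polynomial ℂ))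
    (hP : ∀ i j, (P i j).degree ≤ (g : ℕ)) (hQ : ∀ i j, (Q i j).degree ≤ (t : ℕ)) :
    polyFrobNorm (P * Q) ≤
      min (Real.sqrt ((g : ℝ) + 1)) (Real.sqrt ((t : ℝ) + 1)) *
        polyFrobNorm P * polyFrobNorm Q := by
  have hg := polyFrobNorm_mul_le_sqrt_mul g P Q hP
  have ht := polyFrobNorm_mul_le_sqrt_mul t Qᵀ Pᵀ fun i j => hQ j i
  rw [← Matrix.transpose_mul, polyFrobNorm_transpose, polyFrobNorm_transpose,
    polyFrobNorm_transpose, mul_right_comm] at ht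
  rw [min_mul_of_nonneg _ _ (polyFrobNorm_nonneg _),
    min_mul_of_nonneg _ _ (polyFrobNorm_nonneg _)]
  exact le_min hg ht
end
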